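/- Let Ω ⊂ ℝ² be a bounded, open, connected set containing the origin O, and let N ∈ E(Ω) have finite degree of divergence with representation N = Σ_{α∈ℕ², |α| ≤ deg(N)} N^α ∂^α δ_O, N^α ∈ ℝ. If N^α = 0 for all |α| < 2, then there exists E ∈ E(Ω,Sym) such that Curl Curl E = N in D'(Ω). -/

import Mathlib

/-!
Common framework: distributions with point singularities on open subsets of ℝⁿ,
following the paper's setup (test functions, distributions, restriction, scaling
degree and degree of divergence, singular fields, distributional operators).
-/

set_option linter.unusedVariables false

open MeasureTheory Metric Filter Topology Set
open scoped ContDiff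

namespace Paper

/-- Points of `ℝⁿ`. -/
abbrev Pt (n : ℕ) := Fin n → ℝ

/-- A test function for an open set `U ⊆ ℝⁿ`: a compactly supported smooth
function on `ℝⁿ` whose (closed) support lies inside `U`. -/
def IsTestFun {n : ℕ} (U : Set (Pt n)) (f : Pt n → ℝ) : Prop :=
  ContDiff ℝ ∞ f ∧ HasCompactSupport f ∧ tsupport f ⊆ U

theorem isTestFun_zero {n : ℕ} (U : Set (Pt n)) : IsTestFun U (0 : Pt n → ℝ) := by
  have hts : tsupport (0 : Pt n → ℝ) = ∅ := by
    simp [tsupport]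
  exact ⟨contDiff_const, by simp [HasCompactSupport, hts], by simp [hts]⟩

/-- The space `D(U)` of test functions, as a submodule of all functions `ℝⁿ → ℝ`. -/
def testSubmodule (n : ℕ) (U : Set (Pt n)) : Submodule ℝ (Pt n → ℝ) where
  carrier := {f | IsTestFun U f}
  add_mem' := fun hf hg =>
    ⟨hf.1.add hg.1, hf.2.1.add hg.2.1,
      (tsupport_add _ _).trans (union_subset hf.2.2 hg.2.2)⟩
  zero_mem' := isTestFun_zero U
  smul_mem' := fun c f hf =>
    ⟨hf.1.const_smul c, hf.2.1.mono (Function.support_const_smul_subset c f),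
      (closure_mono (Function.support_const_smul_subset c f)).trans hf.2.2⟩

abbrev TestFun (n : ℕ) (U : Set (Pt n)) := ↥(testSubmodule n U)

theorem TestFun.isTF {n : ℕ} {U : Set (Pt n)} (φ : TestFun n U) :
    IsTestFun U (φ : Pt n → ℝ) := φ.2

/-- Convergence of a sequence of test functions in `D(U)`: the supports stay inside a
common compact subset of `U` and all iterated derivatives converge uniformly. -/
def TFConv {n : ℕ} {U : Set (Pt n)} (φ : ℕ → TestFun n U) (ψ : TestFun n U) : Prop :=
  (∃ K : Set (Pt n), IsCompact K ∧ K ⊆ U ∧ ∀ j, tsupport (φ j : Pt n → ℝ) ⊆ K) ∧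
  ∀ m : ℕ, TendstoUniformly (fun j x => iteratedFDeriv ℝ m (φ j : Pt n → ℝ) x)
      (fun x => iteratedFDeriv ℝ m (ψ : Pt n → ℝ) x) atTop

/-- A distribution on `U`, i.e. an element of `D'(U)`: a linear functional on `D(U)`
which is (sequentially) continuous for the test-function topology. -/
structure Dist (n : ℕ) (U : Set (Pt n)) where
  toLin : TestFun n U →ₗ[ℝ] ℝ
  cont : ∀ (φ : ℕ → TestFun n U) (ψ : TestFun n U), TFConv φ ψ →
    Tendsto (fun j => toLin (φ j)) atTop (𝓝 (toLin ψ))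

instance {n : ℕ} {U : Set (Pt n)} : Zero (Dist n U) :=
  ⟨{ toLin := 0
     cont := by intro φ ψ _; simp only [LinearMap.zero_apply]; exact tendsto_const_nhds }⟩

/-- The inclusion `D(W) → D(U)` for `W ⊆ U` (extension of test functions by zero). -/
def tfIncl {n : ℕ} {W U : Set (Pt n)} (h : W ⊆ U) : TestFun n W →ₗ[ℝ] TestFun n U where
  toFun φ := ⟨(φ : Pt n → ℝ), φ.isTF.1, φ.isTF.2.1, φ.isTF.2.2.trans h⟩
  map_add' φ ψ := rfl
  map_smul' c φ := rfl

/-- Restriction `T|_W ∈ D'(W)` of a distribution `T ∈ D'(U)` to a subset `W ⊆ U`. -/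
noncomputable def Dist.restrict {n : ℕ} {U : Set (Pt n)} (T : Dist n U) {W : Set (Pt n)}
    (h : W ⊆ U) : Dist n W where
  toLin := T.toLin.comp (tfIncl h)
  cont := fun φ ψ hconv => by
    refine T.cont (fun j => tfIncl h (φ j)) (tfIncl h ψ) ⟨?_, hconv.2⟩
    obtain ⟨K, hK1, hK2, hK3⟩ := hconv.1
    exact ⟨K, hK1, hK2.trans h, hK3⟩

/-- The partial derivative `∂f/∂xᵢ` of a function on `ℝⁿ`. -/
noncomputable def pderivFun {n : ℕ} (i : Fin n) (f : Pt n → ℝ) : Pt n → ℝ :=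
  fun x => fderiv ℝ f x (Pi.single i 1)

theorem isTestFun_pderiv {n : ℕ} {U : Set (Pt n)} (i : Fin n) {f : Pt n → ℝ}
    (hf : IsTestFun U f) : IsTestFun U (pderivFun i f) := by
  have hsupp : Function.support (pderivFun i f) ⊆ tsupport f := by
    intro x hx
    apply support_fderiv_subset (𝕜 := ℝ)
    intro h
    exact hx (by simp [pderivFun, h])
  refine ⟨(hf.1.fderiv_right (by exact_mod_cast le_top)).clm_apply contDiff_const,
    hf.2.1.mono' hsupp, ?_⟩
  exact (closure_minimal hsupp (isClosed_tsupport f)).trans hf.2.2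

/-- The partial derivative `∂φ/∂xᵢ` of a test function. -/
noncomputable def pdT {n : ℕ} {U : Set (Pt n)} (i : Fin n) (φ : TestFun n U) : TestFun n U :=
  ⟨pderivFun i (φ : Pt n → ℝ), isTestFun_pderiv i φ.isTF⟩

/-- The iterated partial derivative `∂^α f` for a multi-index `α ∈ ℕⁿ`. -/
noncomputable def mpdN {n : ℕ} (α : Fin n → ℕ) (f : Pt n → ℝ) : Pt n → ℝ :=
  (List.finRange n).foldr (fun i g => (pderivFun i)^[α i] g) f

/-- The iterated partial derivative `∂₁^a ∂₂^b f` in two dimensions. -/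
noncomputable def mpd2 (a b : ℕ) (f : Pt 2 → ℝ) : Pt 2 → ℝ :=
  (pderivFun (0 : Fin 2))^[a] ((pderivFun (1 : Fin 2))^[b] f)

/-- The rescaled function `φ_λ(x) = λ⁻ⁿ φ(x/λ)`. -/
noncomputable def scaleFun {n : ℕ} (lam : ℝ) (f : Pt n → ℝ) : Pt n → ℝ :=
  fun x => (lam ^ n)⁻¹ * f (lam⁻¹ • x)

/-- `k` belongs to the scaling set of `T` (w.r.t. the origin) if
`λ^k (T|_{B_r})_λ → 0` in the sense of distributions as `λ → 0⁺`, for some ball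
`B_r` around the origin with `B_r ∖ {O} ⊆ U`.  The rescaled test functions are
encoded by an arbitrary family `Φ` with `(Φ λ) = φ_λ` for `λ ∈ (0,1)`. -/
def sdSet {n : ℕ} {U : Set (Pt n)} (T : Dist n U) : Set ℝ :=
  {k | ∃ r > 0, ball (0 : Pt n) r \ {0} ⊆ U ∧
    ∀ φ : TestFun n U, tsupport (φ : Pt n → ℝ) ⊆ ball (0 : Pt n) r →
    ∀ Φ : ℝ → TestFun n U,
      (∀ lam : ℝ, 0 < lam → lam < 1 → ((Φ lam : Pt n → ℝ) = scaleFun lam (φ : Pt n → ℝ))) →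
      Tendsto (fun lam : ℝ => lam ^ k * T.toLin (Φ lam)) (𝓝[>] 0) (𝓝 0)}

/-- The scaling degree of `T` with respect to the origin, as an extended real. -/
noncomputable def sd {n : ℕ} {U : Set (Pt n)} (T : Dist n U) : EReal :=
  sInf {x : EReal | ∃ k ∈ sdSet T, x = (k : EReal)}

/-- The degree of divergence `deg(T) = sd(T) − n` with respect to the origin. -/
noncomputable def degDiv {n : ℕ} {U : Set (Pt n)} (T : Dist n U) : EReal :=
  sd T - ((n : ℝ) : EReal)

/-- Scaling set for distributions on all of `ℝⁿ`, defined via global rescaling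
`T_λ(φ) = T(φ_λ)` (no localization to a ball). -/
def sdSetG {n : ℕ} (T : Dist n univ) : Set ℝ :=
  {k | ∀ φ : TestFun n univ, ∀ Φ : ℝ → TestFun n univ,
      (∀ lam : ℝ, 0 < lam → lam < 1 → ((Φ lam : Pt n → ℝ) = scaleFun lam (φ : Pt n → ℝ))) →
      Tendsto (fun lam : ℝ => lam ^ k * T.toLin (Φ lam)) (𝓝[>] 0) (𝓝 0)}

noncomputable def sdG {n : ℕ} (T : Dist n univ) : EReal :=
  sInf {x : EReal | ∃ k ∈ sdSetG T, x = (k : EReal)}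

/-- Degree of divergence (global version, for distributions on all of `ℝⁿ`). -/
noncomputable def degDivG {n : ℕ} (T : Dist n univ) : EReal :=
  sdG T - ((n : ℝ) : EReal)

/-- Scaling degree of an `ℝ²`-valued distribution. -/
noncomputable def sdV {U : Set (Pt 2)} (v : Fin 2 → Dist 2 U) : EReal := ⨆ i, sd (v i)

/-- Degree of divergence of an `ℝ²`-valued distribution. -/
noncomputable def degDivV {U : Set (Pt 2)} (v : Fin 2 → Dist 2 U) : EReal :=
  sdV v - ((2 : ℝ) : EReal)

/-- Scaling degree of a matrix-valued distribution. -/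
noncomputable def sdM {U : Set (Pt 2)} (V : Fin 2 → Fin 2 → Dist 2 U) : EReal :=
  ⨆ i, ⨆ j, sd (V i j)

/-- Degree of divergence of a matrix-valued distribution. -/
noncomputable def degDivM {U : Set (Pt 2)} (V : Fin 2 → Fin 2 → Dist 2 U) : EReal :=
  sdM V - ((2 : ℝ) : EReal)

/-- `x ∈ ℝ ∪ {±∞}` is finite. -/
def EReal.IsFinite (x : EReal) : Prop := ∃ k : ℝ, x = (k : EReal)

/-- `T` is represented on the subset `V ⊆ U` by the smooth function `f`:
this expresses that `T|_V` is the smooth map `f`. -/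
def RepOn {n : ℕ} {U : Set (Pt n)} (T : Dist n U) (f : Pt n → ℝ) (V : Set (Pt n)) : Prop :=
  ContDiffOn ℝ ∞ f V ∧
  ∀ φ : TestFun n U, tsupport (φ : Pt n → ℝ) ⊆ V →
    T.toLin φ = ∫ x, f x * (φ : Pt n → ℝ) x

/-- The support of `T` is contained in the set `S`:  `T` vanishes on every test
function whose support does not meet `S`. -/
def SuppIn {n : ℕ} {U : Set (Pt n)} (T : Dist n U) (S : Set (Pt n)) : Prop :=
  ∀ φ : TestFun n U, tsupport (φ : Pt n → ℝ) ∩ S = ∅ → T.toLin φ = 0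

/-! ### Two-dimensional geometry -/

/-- The point of the circle of radius `ε` (centred at the origin) at angle `θ`. -/
noncomputable def circPt (ε θ : ℝ) : Pt 2 := ![ε * Real.cos θ, ε * Real.sin θ]

/-- Unit tangent to the (counter-clockwise) circle at angle `θ`. -/
noncomputable def tanVec (θ : ℝ) : Pt 2 := ![-Real.sin θ, Real.cos θ]

/-- Outward unit normal to the circle at angle `θ`. -/
noncomputable def norVec (θ : ℝ) : Pt 2 := ![Real.cos θ, Real.sin θ]

/-- The closed Euclidean disc of radius `ε` centred at the origin. -/
def eball (ε : ℝ) : Set (Pt 2) := {x | x 0 ^ 2 + x 1 ^ 2 ≤ ε ^ 2}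

/-- The circulation `∮_{∂B_ε} ⟨A₀, t⟩ dl` of a vector field around the circle `∂B_ε`. -/
noncomputable def circTan (A0 : Fin 2 → Pt 2 → ℝ) (ε : ℝ) : ℝ :=
  ∫ θ in (0:ℝ)..(2 * Real.pi),
    (A0 0 (circPt ε θ) * (-Real.sin θ) + A0 1 (circPt ε θ) * Real.cos θ) * ε

/-- The flux `∮_{∂B_ε} ⟨A₀, n⟩ dl` of a vector field through the circle `∂B_ε`. -/
noncomputable def circNor (A0 : Fin 2 → Pt 2 → ℝ) (ε : ℝ) : ℝ :=
  ∫ θ in (0:ℝ)..(2 * Real.pi),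
    (A0 0 (circPt ε θ) * Real.cos θ + A0 1 (circPt ε θ) * Real.sin θ) * ε

/-- `curl f = ∂₁f₂ − ∂₂f₁` of a smooth planar vector field. -/
noncomputable def curlFun (A0 : Fin 2 → Pt 2 → ℝ) : Pt 2 → ℝ :=
  fun x => pderivFun 0 (A0 1) x - pderivFun 1 (A0 0) x

/-- `div f = ∂₁f₁ + ∂₂f₂` of a smooth planar vector field. -/
noncomputable def divFun (A0 : Fin 2 → Pt 2 → ℝ) : Pt 2 → ℝ :=
  fun x => pderivFun 0 (A0 0) x + pderivFun 1 (A0 1) x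

/-- `curl curl V = ∂₁∂₁V₂₂ − ∂₁∂₂(V₁₂+V₂₁) + ∂₂∂₂V₁₁` of a smooth matrix field. -/
noncomputable def ccFun (E0 : Fin 2 → Fin 2 → Pt 2 → ℝ) : Pt 2 → ℝ := fun x =>
  pderivFun 0 (pderivFun 0 (E0 1 1)) x
    - pderivFun 0 (pderivFun 1 (fun y => E0 0 1 y + E0 1 0 y)) x
    + pderivFun 1 (pderivFun 1 (E0 0 0)) x

/-- The `i`-th component of the Cesàro loop integral
`∮_{∂B_ε} { E₀(y) + (y−x) × curl E₀(y) } dy` around the circle `∂B_ε`. -/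
noncomputable def cesaro (E0 : Fin 2 → Fin 2 → Pt 2 → ℝ) (x : Pt 2) (ε : ℝ) (i : Fin 2) : ℝ :=
  ∫ θ in (0:ℝ)..(2 * Real.pi),
    (∑ j : Fin 2, (E0 i j (circPt ε θ) +
        ∑ k : Fin 2, (circPt ε θ k - x k) *
          (pderivFun j (E0 i k) (circPt ε θ) - pderivFun k (E0 i j) (circPt ε θ)))
      * tanVec θ j) * ε

/-! ### Distributional operators, expressed through their action on test functions -/

/-- `∇u = v` for distributions: `vᵢ(φ) = −u(∂ᵢφ)`. -/
def IsGradOf {n : ℕ} {U : Set (Pt n)} (u : Dist n U) (v : Fin n → Dist n U) : Prop :=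
  ∀ (i : Fin n) (φ : TestFun n U), (v i).toLin φ = - u.toLin (pdT i φ)

/-- `Curl v = T` for a planar vector distribution `v`:
`T(ψ) = −v(e₃ × ∇ψ) = v₁(∂₂ψ) − v₂(∂₁ψ)`. -/
def CurlEq {U : Set (Pt 2)} (v : Fin 2 → Dist 2 U) (T : Dist 2 U) : Prop :=
  ∀ ψ : TestFun 2 U, T.toLin ψ = (v 0).toLin (pdT 1 ψ) - (v 1).toLin (pdT 0 ψ)

/-- `Curl v = 0` for a planar vector distribution. -/
def CurlZero {U : Set (Pt 2)} (v : Fin 2 → Dist 2 U) : Prop :=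
  ∀ ψ : TestFun 2 U, (v 0).toLin (pdT 1 ψ) - (v 1).toLin (pdT 0 ψ) = 0

/-- `Div v = T` for a planar vector distribution `v`: `T(ψ) = −v(∇ψ)`. -/
def DivEq {U : Set (Pt 2)} (v : Fin 2 → Dist 2 U) (T : Dist 2 U) : Prop :=
  ∀ ψ : TestFun 2 U,
    T.toLin ψ = -((v 0).toLin (pdT 0 ψ) + (v 1).toLin (pdT 1 ψ))

/-- The stress equilibrium equation `Div σ + B = 0` in `D'(U, ℝ²)`, where
`(Div σ)ᵢ(ψ) = −Σⱼ σᵢⱼ(∂ⱼψ)`. -/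
def DivPlusEqZero {U : Set (Pt 2)} (σ : Fin 2 → Fin 2 → Dist 2 U)
    (B : Fin 2 → Dist 2 U) : Prop :=
  ∀ (i : Fin 2) (ψ : TestFun 2 U),
    -((σ i 0).toLin (pdT 0 ψ) + (σ i 1).toLin (pdT 1 ψ)) + (B i).toLin ψ = 0

/-- The evaluation `(Curl Curl V)(ψ) = V(𝔸∇²ψ)` for a matrix distribution `V`. -/
noncomputable def ccEval {U : Set (Pt 2)} (V : Fin 2 → Fin 2 → Dist 2 U)
    (ψ : TestFun 2 U) : ℝ :=
  (V 0 0).toLin (pdT 1 (pdT 1 ψ)) - (V 0 1).toLin (pdT 0 (pdT 1 ψ))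
    - (V 1 0).toLin (pdT 1 (pdT 0 ψ)) + (V 1 1).toLin (pdT 0 (pdT 0 ψ))

/-- `Curl Curl V = T` in `D'(U)` for a matrix distribution `V`. -/
def CurlCurlEq {U : Set (Pt 2)} (V : Fin 2 → Fin 2 → Dist 2 U) (T : Dist 2 U) : Prop :=
  ∀ ψ : TestFun 2 U, ccEval V ψ = T.toLin ψ

/-- `Curl Curl V = 0` in `D'(U)` for a matrix distribution `V`. -/
def CurlCurlZero {U : Set (Pt 2)} (V : Fin 2 → Fin 2 → Dist 2 U) : Prop :=
  ∀ ψ : TestFun 2 U, ccEval V ψ = 0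

/-- `E = (1/2)(∇u + (∇u)ᵀ)` for distributions:
`Eᵢⱼ(φ) = −(1/2)(uᵢ(∂ⱼφ) + uⱼ(∂ᵢφ))`. -/
def IsSymGrad {U : Set (Pt 2)} (u : Fin 2 → Dist 2 U)
    (E : Fin 2 → Fin 2 → Dist 2 U) : Prop :=
  ∀ (i j : Fin 2) (φ : TestFun 2 U),
    (E i j).toLin φ = -(1/2 : ℝ) * ((u i).toLin (pdT j φ) + (u j).toLin (pdT i φ))

/-- The polynomial `(−1)^{a+b} x₁^a x₂^b / (a! b!)`, the local model of the test
function `w^α` for the multi-index `α = (a,b)`. -/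
noncomputable def polyA (a b : ℕ) : Pt 2 → ℝ :=
  fun x => (-1 : ℝ) ^ (a + b) * x 0 ^ a * x 1 ^ b / ((Nat.factorial a : ℝ) * (Nat.factorial b : ℝ))


/-!
Taylor's formula with integral remainder at the origin reads
`ψ x = ψ 0 + Σ xᵢ ∂ᵢψ(0) + Σ xᵢ xⱼ R(∂ⱼ∂ᵢψ)(x)` with `R g (x) = ∫₀¹ (1 - t) g(t x) dt`.
Since `N` is supported at the origin and annihilates (cut-offs of) the polynomials of degree
`< 2`, `N ψ = N (η Σ xᵢ xⱼ R(∂ⱼ∂ᵢψ))` for a bump function `η`, and this is `Curl Curl E` applied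
to `ψ` for a symmetric `E` built from `φ ↦ N(q R φ)` with suitable quadratic weights `q`.
`E` is supported at the origin because `R φ` vanishes near the origin when `φ` does, and it is
continuous on test functions because `‖Dᵐ(R g)‖ ≤ sup ‖Dᵐ g‖` and multiplication by a test
function is continuous by the Leibniz rule.
-/

open scoped Interval

universe u

section RadialAverage

-- A common universe lets `E →L[ℝ] F` take the place of `F` in the inductions on derivatives.
variable {E F : Type u} [NormedAddCommGroup E] [NormedSpace ℝ E]
  [NormedAddCommGroup F] [NormedSpace ℝ F] {c : ℝ → ℝ}

noncomputable def radialAvg (c : ℝ → ℝ) (g : E → F) (x : E) : F :=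
  ∫ t in (0 : ℝ)..1, c t • g (t • x)

theorem continuous_radialAvg_integrand (hc : Continuous c) {g : E → F} (hg : Continuous g)
    (x : E) : Continuous fun t : ℝ => c t • g (t • x) :=
  hc.smul (hg.comp (continuous_id.smul continuous_const))

theorem radialAvg_add (hc : Continuous c) {g h : E → F} (hg : Continuous g)
    (hh : Continuous h) : radialAvg c (g + h) = radialAvg c g + radialAvg c h := by
  funext x
  simp only [radialAvg, Pi.add_apply, smul_add]
  exact intervalIntegral.integral_add
    ((continuous_radialAvg_integrand hc hg x).intervalIntegrable _ _)
    ((continuous_radialAvg_integrand hc hh x).intervalIntegrable _ _)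

theorem radialAvg_smul (a : ℝ) (g : E → F) : radialAvg c (a • g) = a • radialAvg c g := by
  funext x
  simp only [radialAvg, Pi.smul_apply, smul_comm (c _) a]
  exact intervalIntegral.integral_smul a _

theorem exists_abs_le_on_unitInterval (hc : Continuous c) :
    ∃ M, ∀ t ∈ Icc (0 : ℝ) 1, |c t| ≤ M :=
  isCompact_Icc.exists_bound_of_continuousOn hc.continuousOn

theorem hasFDerivAt_radialAvg (hc : Continuous c) {g : E → F} (hg : ContDiff ℝ 1 g)
    (hgs : HasCompactSupport g) (x₀ : E) :
    HasFDerivAt (radialAvg c g) (radialAvg (fun t => c t * t) (fderiv ℝ g) x₀) x₀ := by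
  have hg' : Continuous (fderiv ℝ g) := hg.continuous_fderiv one_ne_zero
  obtain ⟨C, hC⟩ := hg'.bounded_above_of_compact_support (hgs.fderiv (𝕜 := ℝ))
  obtain ⟨M, hM⟩ := exists_abs_le_on_unitInterval hc
  have hunit : ∀ t ∈ Ι (0 : ℝ) 1, t ∈ Icc (0 : ℝ) 1 := fun t ht =>
    Ioc_subset_Icc_self (by rwa [uIoc_of_le zero_le_one] at ht)
  refine intervalIntegral.hasFDerivAt_integral_of_dominated_of_fderiv_le (𝕜 := ℝ)
    (F := fun x t => c t • g (t • x)) (F' := fun x t => (c t * t) • fderiv ℝ g (t • x))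
    (bound := fun _ => M * C) (ball_mem_nhds x₀ one_pos)
    (Eventually.of_forall fun x =>
      (continuous_radialAvg_integrand hc hg.continuous x).aestronglyMeasurable)
    ((continuous_radialAvg_integrand hc hg.continuous x₀).intervalIntegrable _ _)
    (continuous_radialAvg_integrand (c := fun t => c t * t) (hc.mul continuous_id) hg'
      x₀).aestronglyMeasurable
    (Eventually.of_forall fun t ht x _ => ?_) intervalIntegrable_const
    (Eventually.of_forall fun t _ x _ => ?_)
  · obtain ⟨ht0, ht1⟩ := hunit t ht
    rw [norm_smul, Real.norm_eq_abs, abs_mul, abs_of_nonneg ht0]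
    have hM0 : 0 ≤ M := (abs_nonneg _).trans (hM t ⟨ht0, ht1⟩)
    calc |c t| * t * ‖fderiv ℝ g (t • x)‖ ≤ M * 1 * C :=
          mul_le_mul (mul_le_mul (hM t ⟨ht0, ht1⟩) ht1 ht0 hM0) (hC _) (norm_nonneg _)
            (by positivity)
      _ = M * C := by ring
  · have hd : HasFDerivAt g (fderiv ℝ g (t • x)) (t • x) :=
      (hg.differentiable one_ne_zero _).hasFDerivAt
    have hcomp := (hd.comp x ((hasFDerivAt_id x).const_smul t)).const_smul (c t)
    have hD : (c t * t) • fderiv ℝ g (t • x)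
        = c t • (fderiv ℝ g (t • x)).comp (t • ContinuousLinearMap.id ℝ E) := by
      ext v
      simp [smul_smul]
    rw [hD]
    exact hcomp

theorem fderiv_radialAvg (hc : Continuous c) {g : E → F} (hg : ContDiff ℝ 1 g)
    (hgs : HasCompactSupport g) :
    fderiv ℝ (radialAvg c g) = radialAvg (fun t => c t * t) (fderiv ℝ g) :=
  funext fun x => (hasFDerivAt_radialAvg hc hg hgs x).fderiv

theorem contDiff_radialAvg (hc : Continuous c) {g : E → F} (hg : ContDiff ℝ ∞ g)
    (hgs : HasCompactSupport g) : ContDiff ℝ ∞ (radialAvg c g) := by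
  refine contDiff_infty.2 fun n => ?_
  induction n generalizing F c g with
  | zero =>
    exact contDiff_zero.2 <| continuous_iff_continuousAt.2 fun x =>
      (hasFDerivAt_radialAvg hc (hg.of_le (by simp)) hgs x).differentiableAt.continuousAt
  | succ n ih =>
    rw [Nat.cast_succ, contDiff_succ_iff_fderiv]
    refine ⟨fun x => (hasFDerivAt_radialAvg hc (hg.of_le (by simp)) hgs x).differentiableAt,
      by simp, ?_⟩
    rw [fderiv_radialAvg hc (hg.of_le (by simp)) hgs]
    exact ih (c := fun t => c t * t) (hc.mul continuous_id) (hg.fderiv_right (by simp))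
      (hgs.fderiv (𝕜 := ℝ))

theorem norm_iteratedFDeriv_radialAvg_le (hc : Continuous c) {M : ℝ}
    (hcM : ∀ t ∈ Icc (0 : ℝ) 1, |c t| ≤ M) {g : E → F} (hg : ContDiff ℝ ∞ g)
    (hgs : HasCompactSupport g) {m : ℕ} {C : ℝ} (hC : ∀ y, ‖iteratedFDeriv ℝ m g y‖ ≤ C)
    (x : E) : ‖iteratedFDeriv ℝ m (radialAvg c g) x‖ ≤ M * C := by
  induction m generalizing F c g with
  | zero =>
    simp only [norm_iteratedFDeriv_zero] at hC ⊢
    have hbound : ∀ t ∈ Ι (0 : ℝ) 1, ‖c t • g (t • x)‖ ≤ M * C := by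
      intro t ht
      have ht' := Ioc_subset_Icc_self (by rwa [uIoc_of_le zero_le_one] at ht)
      rw [norm_smul, Real.norm_eq_abs]
      exact mul_le_mul (hcM t ht') (hC _) (norm_nonneg _) ((abs_nonneg _).trans (hcM t ht'))
    simpa [radialAvg] using intervalIntegral.norm_integral_le_of_norm_le_const hbound
  | succ m ih =>
    rw [← norm_iteratedFDeriv_fderiv, fderiv_radialAvg hc (hg.of_le (by simp)) hgs]
    refine ih (c := fun t => c t * t) (hc.mul continuous_id) (fun t ht => ?_)
      (hg.fderiv_right (by simp)) (hgs.fderiv (𝕜 := ℝ))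
      fun y => by rw [norm_iteratedFDeriv_fderiv]; exact hC y
    rw [abs_mul, abs_of_nonneg ht.1]
    exact (mul_le_of_le_one_right (abs_nonneg _) ht.2).trans (hcM t ht)

theorem radialAvg_eventuallyEq_zero {g : E → F} (hg : g =ᶠ[𝓝 0] 0) :
    radialAvg c g =ᶠ[𝓝 0] 0 := by
  obtain ⟨r, hr, hball⟩ := Metric.eventually_nhds_iff_ball.1 hg
  filter_upwards [ball_mem_nhds (0 : E) hr] with x hx
  have hzero : EqOn (fun t : ℝ => c t • g (t • x)) 0 (uIcc 0 1) := by
    intro t ht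
    rw [uIcc_of_le zero_le_one] at ht
    refine (congrArg _ (hball _ ?_)).trans (smul_zero _)
    rw [mem_ball_zero_iff, norm_smul, Real.norm_eq_abs, abs_of_nonneg ht.1]
    exact (mul_le_of_le_one_left (norm_nonneg x) ht.2).trans_lt (mem_ball_zero_iff.1 hx)
  simp [radialAvg, intervalIntegral.integral_congr hzero]

end RadialAverage

section Taylor

variable {n : ℕ}

theorem contDiff_pderivFun {k m : WithTop ℕ∞} {g : Pt n → ℝ} (hg : ContDiff ℝ k g)
    (hmk : m + 1 ≤ k) (i : Fin n) : ContDiff ℝ m (pderivFun i g) :=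
  (hg.fderiv_right hmk).clm_apply contDiff_const

theorem fderiv_apply_eq_sum_pderivFun (g : Pt n → ℝ) (y x : Pt n) :
    fderiv ℝ g y x = ∑ i, x i * pderivFun i g y := by
  refine ((fderiv ℝ g y).toLinearMap.pi_apply_eq_sum_univ x).trans ?_
  refine Finset.sum_congr rfl fun i _ => ?_
  simp only [pderivFun, ContinuousLinearMap.coe_coe, smul_eq_mul]
  congr 2
  ext j
  simp [Pi.single_apply, eq_comm]

theorem hasDerivAt_comp_smul {g : Pt n → ℝ} (hg : Differentiable ℝ g) (x : Pt n) (s : ℝ) :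
    HasDerivAt (fun s : ℝ => g (s • x)) (∑ i, x i * pderivFun i g (s • x)) s := by
  rw [← fderiv_apply_eq_sum_pderivFun]
  exact (hg (s • x)).hasFDerivAt.comp_hasDerivAt s
    (by simpa using (hasDerivAt_id s).smul_const x)

theorem eq_add_add_integral_one_sub_mul {f f' f'' : ℝ → ℝ} (hf : ∀ t, HasDerivAt f (f' t) t)
    (hf' : ∀ t, HasDerivAt f' (f'' t) t) (hf'' : Continuous f'') :
    f 1 = f 0 + f' 0 + ∫ t in (0 : ℝ)..1, (1 - t) * f'' t := by
  have hG : ∀ t, HasDerivAt (fun s => f s + (1 - s) * f' s) ((1 - t) * f'' t) t := fun t =>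
    ((hf t).add (((hasDerivAt_id t).const_sub 1).mul (hf' t))).congr_deriv (by simp)
  rw [intervalIntegral.integral_eq_sub_of_hasDerivAt (fun t _ => hG t)
    (((continuous_const.sub continuous_id).mul hf'').intervalIntegrable 0 1)]
  ring

theorem taylor_radialAvg {ψ : Pt n → ℝ} (hψ : ContDiff ℝ 2 ψ) (x : Pt n) :
    ψ x = ψ 0 + ∑ i, x i * pderivFun i ψ 0
      + ∑ i, ∑ j, x i * x j * radialAvg (fun t => 1 - t) (pderivFun j (pderivFun i ψ)) x := by
  have hψ' : ∀ i, ContDiff ℝ 1 (pderivFun i ψ) := contDiff_pderivFun hψ (by norm_num)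
  have hψ'' : ∀ i j, Continuous (pderivFun j (pderivFun i ψ)) := fun i j =>
    (contDiff_pderivFun (m := 0) (hψ' i) (by norm_num) j).continuous
  have hderiv2 : ∀ s, HasDerivAt (fun s : ℝ => ∑ i, x i * pderivFun i ψ (s • x))
      (∑ i, x i * ∑ j, x j * pderivFun j (pderivFun i ψ) (s • x)) s := fun s =>
    HasDerivAt.fun_sum fun i _ =>
      (hasDerivAt_comp_smul ((hψ' i).differentiable one_ne_zero) x s).const_mul (x i)
  have hcont : Continuous fun s : ℝ =>
      ∑ i, x i * ∑ j, x j * pderivFun j (pderivFun i ψ) (s • x) := by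
    fun_prop
  have key := eq_add_add_integral_one_sub_mul
    (hasDerivAt_comp_smul (hψ.differentiable (by norm_num)) x) hderiv2 hcont
  have hsplit : (∫ t in (0 : ℝ)..1,
      (1 - t) * ∑ i, x i * ∑ j, x j * pderivFun j (pderivFun i ψ) (t • x))
      = ∑ i, ∑ j, x i * x j * radialAvg (fun t => 1 - t) (pderivFun j (pderivFun i ψ)) x := by
    have hrw : (fun t : ℝ => (1 - t) * ∑ i, x i * ∑ j, x j * pderivFun j (pderivFun i ψ) (t • x))
        = fun t => ∑ i, ∑ j, x i * x j * ((1 - t) • pderivFun j (pderivFun i ψ) (t • x)) := by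
      funext t
      simp only [Finset.mul_sum, smul_eq_mul]
      exact Finset.sum_congr rfl fun i _ => Finset.sum_congr rfl fun j _ => by ring
    rw [hrw, intervalIntegral.integral_finsetSum fun i _ =>
      (by fun_prop : Continuous _).intervalIntegrable _ _]
    refine Finset.sum_congr rfl fun i _ => ?_
    rw [intervalIntegral.integral_finsetSum fun j _ =>
      (by fun_prop : Continuous _).intervalIntegrable _ _]
    simp only [intervalIntegral.integral_const_mul, radialAvg]
  simpa [hsplit] using key

end Taylor

section UniformConvergence

variable {E F : Type u} [NormedAddCommGroup E] [NormedSpace ℝ E]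
  [NormedAddCommGroup F] [NormedSpace ℝ F]

theorem tendstoUniformly_iteratedFDeriv_iff_sub {m : ℕ} {f : ℕ → E → F} {g : E → F}
    (hf : ∀ k, ContDiff ℝ m (f k)) (hg : ContDiff ℝ m g) :
    TendstoUniformly (fun k x => iteratedFDeriv ℝ m (f k) x) (iteratedFDeriv ℝ m g) atTop ↔
      TendstoUniformly (fun k x => iteratedFDeriv ℝ m (g - f k) x) 0 atTop := by
  simp only [Metric.tendstoUniformly_iff, dist_eq_norm,
    iteratedFDeriv_sub_apply hg.contDiffAt (hf _).contDiffAt, Pi.zero_apply, zero_sub, norm_neg]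

theorem tendstoUniformly_iteratedFDeriv_radialAvg {c : ℝ → ℝ} (hc : Continuous c) {m : ℕ}
    {h : ℕ → E → F} (hh : ∀ k, ContDiff ℝ ∞ (h k)) (hhs : ∀ k, HasCompactSupport (h k))
    (hlim : TendstoUniformly (fun k x => iteratedFDeriv ℝ m (h k) x) 0 atTop) :
    TendstoUniformly (fun k x => iteratedFDeriv ℝ m (radialAvg c (h k)) x) 0 atTop := by
  obtain ⟨M, hM⟩ := exists_abs_le_on_unitInterval hc
  rw [Metric.tendstoUniformly_iff] at hlim ⊢
  intro ε hε
  filter_upwards [hlim (ε / (2 * (|M| + 1))) (by positivity)] with k hk x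
  simp only [Pi.zero_apply, dist_zero_left] at hk ⊢
  have hM' : ∀ t ∈ Icc (0 : ℝ) 1, |c t| ≤ |M| + 1 := fun t ht => by
    linarith [hM t ht, le_abs_self M]
  calc ‖iteratedFDeriv ℝ m (radialAvg c (h k)) x‖ ≤ (|M| + 1) * (ε / (2 * (|M| + 1))) :=
        norm_iteratedFDeriv_radialAvg_le hc hM' (hh k) (hhs k) (fun y => (hk y).le) x
    _ = ε / 2 := by field_simp
    _ < ε := half_lt_self hε

theorem tendstoUniformly_iteratedFDeriv_smul {q : E → ℝ} (hq : ContDiff ℝ ∞ q)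
    (hqs : HasCompactSupport q) {h : ℕ → E → F} (hh : ∀ k, ContDiff ℝ ∞ (h k))
    (hlim : ∀ l, TendstoUniformly (fun k x => iteratedFDeriv ℝ l (h k) x) 0 atTop) (m : ℕ) :
    TendstoUniformly (fun k x => iteratedFDeriv ℝ m (fun y => q y • h k y) x) 0 atTop := by
  have hQ : ∀ l, ∃ Q, 0 ≤ Q ∧ ∀ x, ‖iteratedFDeriv ℝ l q x‖ ≤ Q := fun l => by
    obtain ⟨C, hC⟩ := (hq.continuous_iteratedFDeriv (WithTop.coe_le_coe.2 le_top)
      ).bounded_above_of_compact_support (hqs.iteratedFDeriv l)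
    exact ⟨max C 0, le_max_right _ _, fun x => (hC x).trans (le_max_left _ _)⟩
  choose Q hQ0 hQ using hQ
  set S := ∑ l ∈ Finset.range (m + 1), (m.choose l : ℝ) * Q l with hS_def
  have hS : 0 ≤ S := Finset.sum_nonneg fun l _ => mul_nonneg (Nat.cast_nonneg _) (hQ0 l)
  rw [Metric.tendstoUniformly_iff]
  intro ε hε
  have hsmall : ∀ᶠ k in atTop, ∀ l ∈ Finset.range (m + 1), ∀ x,
      ‖iteratedFDeriv ℝ l (h k) x‖ < ε / (2 * (S + 1)) :=
    (Finset.eventually_all _).2 fun l _ => by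
      simpa using Metric.tendstoUniformly_iff.1 (hlim l) _ (by positivity)
  filter_upwards [hsmall] with k hk x
  rw [Pi.zero_apply, dist_zero_left]
  calc ‖iteratedFDeriv ℝ m (fun y => q y • h k y) x‖
      ≤ ∑ l ∈ Finset.range (m + 1), (m.choose l : ℝ) * ‖iteratedFDeriv ℝ l q x‖
          * ‖iteratedFDeriv ℝ (m - l) (h k) x‖ :=
        norm_iteratedFDeriv_smul_le hq (hh k) x (WithTop.coe_le_coe.2 le_top)
    _ ≤ ∑ l ∈ Finset.range (m + 1), (m.choose l : ℝ) * Q l * (ε / (2 * (S + 1))) :=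
        Finset.sum_le_sum fun l _ => mul_le_mul
          (mul_le_mul_of_nonneg_left (hQ l x) (Nat.cast_nonneg _))
          (hk (m - l) (Finset.mem_range.2 (by omega)) x).le (norm_nonneg _)
          (mul_nonneg (Nat.cast_nonneg _) (hQ0 l))
    _ = S / (S + 1) * (ε / 2) := by rw [← Finset.sum_mul, ← hS_def]; field_simp
    _ < ε := by
        have : S / (S + 1) < 1 := (div_lt_one (by positivity)).2 (lt_add_one S)
        nlinarith

end UniformConvergence

section TestFunctions

variable {n : ℕ} {U : Set (Pt n)}

theorem Dist.ext {T S : Dist n U} (h : T.toLin = S.toLin) : T = S := by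
  cases T; cases S; cases h; rfl

theorem TestFun.contDiff (φ : TestFun n U) (k : ℕ) : ContDiff ℝ k (φ : Pt n → ℝ) :=
  φ.isTF.1.of_le (WithTop.coe_le_coe.2 le_top)

theorem suppIn_singleton_iff (T : Dist n U) (x₀ : Pt n) :
    SuppIn T {x₀} ↔ ∀ φ : TestFun n U, (φ : Pt n → ℝ) =ᶠ[𝓝 x₀] 0 → T.toLin φ = 0 := by
  simp only [SuppIn, inter_singleton_eq_empty, notMem_tsupport_iff_eventuallyEq]

theorem IsTestFun.mul_contDiff {q f : Pt n → ℝ} (hq : IsTestFun U q) (hf : ContDiff ℝ ∞ f) :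
    IsTestFun U (fun x => q x * f x) :=
  ⟨hq.1.mul hf, hq.2.1.mul_right, tsupport_mul_subset_left.trans hq.2.2⟩

noncomputable def Dist.comp (T : Dist n U) (L : TestFun n U →ₗ[ℝ] TestFun n U)
    (hL : ∀ φ ψ, TFConv φ ψ → TFConv (fun k => L (φ k)) (L ψ)) : Dist n U where
  toLin := T.toLin ∘ₗ L
  cont φ ψ h := T.cont _ _ (hL φ ψ h)

variable {c : ℝ → ℝ} {q : Pt n → ℝ}

noncomputable def mulRadialAvg (hc : Continuous c) (hq : IsTestFun U q) :
    TestFun n U →ₗ[ℝ] TestFun n U where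
  toFun φ := ⟨fun x => q x * radialAvg c φ x,
    hq.mul_contDiff (contDiff_radialAvg hc φ.isTF.1 φ.isTF.2.1)⟩
  map_add' φ ψ := Subtype.ext <| funext fun x => by
    simp [radialAvg_add hc φ.isTF.1.continuous ψ.isTF.1.continuous, mul_add]
  map_smul' a φ := Subtype.ext <| funext fun x => by
    simp [radialAvg_smul, mul_left_comm]

theorem coe_mulRadialAvg (hc : Continuous c) (hq : IsTestFun U q) (φ : TestFun n U) :
    (mulRadialAvg hc hq φ : Pt n → ℝ) = fun x => q x * radialAvg c φ x := rfl

theorem tfConv_mulRadialAvg (hc : Continuous c) (hq : IsTestFun U q) {φ : ℕ → TestFun n U}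
    {ψ : TestFun n U} (h : TFConv φ ψ) :
    TFConv (fun k => mulRadialAvg hc hq (φ k)) (mulRadialAvg hc hq ψ) := by
  refine ⟨⟨tsupport q, hq.2.1, hq.2.2, fun k => tsupport_mul_subset_left⟩, fun m => ?_⟩
  have hdiff : ∀ l, TendstoUniformly
      (fun k x => iteratedFDeriv ℝ l ((ψ - φ k : TestFun n U) : Pt n → ℝ) x) 0 atTop := fun l =>
    (tendstoUniformly_iteratedFDeriv_iff_sub (fun k => (φ k).contDiff l) (ψ.contDiff l)).1 (h.2 l)
  rw [tendstoUniformly_iteratedFDeriv_iff_sub (fun k => (mulRadialAvg hc hq (φ k)).contDiff m)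
    ((mulRadialAvg hc hq ψ).contDiff m)]
  have hcoe : ∀ k, (mulRadialAvg hc hq ψ : Pt n → ℝ) - mulRadialAvg hc hq (φ k)
      = fun y => q y • radialAvg c ((ψ - φ k : TestFun n U) : Pt n → ℝ) y := fun k => by
    rw [← Submodule.coe_sub, ← map_sub]
    rfl
  simp_rw [hcoe]
  exact tendstoUniformly_iteratedFDeriv_smul hq.1 hq.2.1
    (fun k => contDiff_radialAvg hc (ψ - φ k).isTF.1 (ψ - φ k).isTF.2.1)
    (fun l => tendstoUniformly_iteratedFDeriv_radialAvg hc (fun k => (ψ - φ k).isTF.1)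
      (fun k => (ψ - φ k).isTF.2.1) (hdiff l)) m

theorem mulRadialAvg_eventuallyEq_zero (hc : Continuous c) (hq : IsTestFun U q)
    {φ : TestFun n U} (hφ : (φ : Pt n → ℝ) =ᶠ[𝓝 0] 0) :
    (mulRadialAvg hc hq φ : Pt n → ℝ) =ᶠ[𝓝 0] 0 :=
  (radialAvg_eventuallyEq_zero (c := c) hφ).mono fun x hx => by simp [coe_mulRadialAvg, hx]

end TestFunctions

section Plane

variable {Ω : Set (Pt 2)} (η : ContDiffBump (0 : Pt 2))
  (hη : closedBall (0 : Pt 2) η.rOut ⊆ Ω)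

include hη in
theorem isTestFun_bump : IsTestFun Ω η :=
  ⟨η.contDiff, η.hasCompactSupport, η.tsupport_eq ▸ hη⟩

def rot (x : Pt 2) : Pt 2 := ![-x 1, x 0]

theorem contDiff_rot_apply (i : Fin 2) : ContDiff ℝ ∞ fun x : Pt 2 => rot x i := by
  fin_cases i <;> simp [rot] <;> fun_prop

/-- `rot x = e₃ × x`, and the weights `η (e₃ × x)ᵢ (e₃ × x)ⱼ` carry exactly the signs of
`ccEval`: `Curl Curl` of the resulting strain pairs `N` with the Taylor remainder of order two. -/
noncomputable def strainWeight (i j : Fin 2) (x : Pt 2) : ℝ := η x * (rot x i * rot x j)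

include hη in
theorem isTestFun_strainWeight (i j : Fin 2) : IsTestFun Ω (strainWeight η i j) :=
  (isTestFun_bump η hη).mul_contDiff ((contDiff_rot_apply i).mul (contDiff_rot_apply j))

theorem continuous_one_sub : Continuous fun t : ℝ => 1 - t := by fun_prop

noncomputable def pointStrain (N : Dist 2 Ω) (i j : Fin 2) : Dist 2 Ω :=
  N.comp (mulRadialAvg continuous_one_sub (isTestFun_strainWeight η hη i j))
    fun _ _ => tfConv_mulRadialAvg _ _

theorem pointStrain_symm (N : Dist 2 Ω) (i j : Fin 2) :
    pointStrain η hη N i j = pointStrain η hη N j i := by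
  refine Dist.ext (LinearMap.ext fun φ => congrArg N.toLin (Subtype.ext (funext fun x => ?_)))
  simp only [coe_mulRadialAvg, strainWeight, mul_comm (rot x i)]

theorem suppIn_pointStrain {N : Dist 2 Ω} (hsupp : SuppIn N {0}) (i j : Fin 2) :
    SuppIn (pointStrain η hη N i j) {0} := by
  rw [suppIn_singleton_iff] at hsupp ⊢
  exact fun φ hφ => hsupp _ (mulRadialAvg_eventuallyEq_zero _ _ hφ)

theorem contDiff_polyA (a b : ℕ) : ContDiff ℝ ∞ (polyA a b) := by
  unfold polyA
  fun_prop

include hη in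
theorem apply_eq_zero_of_eventuallyEq_affine {N : Dist 2 Ω} (hsupp : SuppIn N {0})
    (hlow : ∀ a b : ℕ, a + b < 2 →
      ∀ w : TestFun 2 Ω, (w : Pt 2 → ℝ) =ᶠ[𝓝 (0 : Pt 2)] polyA a b → N.toLin w = 0)
    (φ : TestFun 2 Ω) (a b₀ b₁ : ℝ)
    (hφ : (φ : Pt 2 → ℝ) =ᶠ[𝓝 0] fun x => a + b₀ * x 0 + b₁ * x 1) :
    N.toLin φ = 0 := by
  let w (k l : ℕ) : TestFun 2 Ω :=
    ⟨fun x => η x * polyA k l x, (isTestFun_bump η hη).mul_contDiff (contDiff_polyA k l)⟩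
  have hw : ∀ k l, (w k l : Pt 2 → ℝ) =ᶠ[𝓝 0] polyA k l := fun k l =>
    η.eventuallyEq_one.mono fun x hx => by simp [w, hx]
  have hrest : ((φ - (a • w 0 0 - b₀ • w 1 0 - b₁ • w 0 1) : TestFun 2 Ω) : Pt 2 → ℝ)
      =ᶠ[𝓝 0] 0 := by
    filter_upwards [hφ, hw 0 0, hw 1 0, hw 0 1] with x hφx h00 h10 h01
    simp [hφx, h00, h10, h01, polyA]
  simpa only [map_sub, map_smul, hlow 0 0 (by norm_num) _ (hw 0 0),
    hlow 1 0 (by norm_num) _ (hw 1 0), hlow 0 1 (by norm_num) _ (hw 0 1), smul_zero, sub_zero]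
    using (suppIn_singleton_iff N 0).1 hsupp _ hrest

include hη in
theorem curlCurlEq_pointStrain {N : Dist 2 Ω} (hsupp : SuppIn N {0})
    (hlow : ∀ a b : ℕ, a + b < 2 →
      ∀ w : TestFun 2 Ω, (w : Pt 2 → ℝ) =ᶠ[𝓝 (0 : Pt 2)] polyA a b → N.toLin w = 0) :
    CurlCurlEq (pointStrain η hη N) N := by
  intro ψ
  let L i j := mulRadialAvg continuous_one_sub (isTestFun_strainWeight η hη i j)
  let χ : TestFun 2 Ω := L 0 0 (pdT 1 (pdT 1 ψ)) - L 0 1 (pdT 0 (pdT 1 ψ))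
    - L 1 0 (pdT 1 (pdT 0 ψ)) + L 1 1 (pdT 0 (pdT 0 ψ))
  have hcc : ccEval (pointStrain η hη N) ψ = N.toLin χ := by
    simp only [χ, map_add, map_sub]
    rfl
  have htaylor : ((ψ - χ : TestFun 2 Ω) : Pt 2 → ℝ) =ᶠ[𝓝 0]
      fun x => (ψ : Pt 2 → ℝ) 0 + pderivFun 0 (ψ : Pt 2 → ℝ) 0 * x 0
        + pderivFun 1 (ψ : Pt 2 → ℝ) 0 * x 1 := by
    filter_upwards [η.eventuallyEq_one] with x hx
    have h := taylor_radialAvg (ψ.contDiff 2) x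
    simp only [Fin.sum_univ_two] at h
    simp [χ, L, coe_mulRadialAvg, strainWeight, rot, hx, pdT]
    linarith
  have h0 := apply_eq_zero_of_eventuallyEq_affine η hη hsupp hlow _ _ _ _ htaylor
  rw [map_sub, sub_eq_zero] at h0
  rw [hcc, h0]

end Plane

theorem statement_16_general (Ω : Set (Pt 2)) (hopen : IsOpen Ω) (h0 : (0 : Pt 2) ∈ Ω)
    (N : Dist 2 Ω) (hsupp : SuppIn N {0})
    (hlow : ∀ a b : ℕ, a + b < 2 →
      ∀ w : TestFun 2 Ω, (w : Pt 2 → ℝ) =ᶠ[𝓝 (0 : Pt 2)] polyA a b → N.toLin w = 0) :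
    ∃ E : Fin 2 → Fin 2 → Dist 2 Ω,
      (∀ i j, E i j = E j i) ∧ (∀ i j, SuppIn (E i j) {0}) ∧ CurlCurlEq E N := by
  obtain ⟨r, hr, hball⟩ := Metric.isOpen_iff.1 hopen 0 h0
  let η : ContDiffBump (0 : Pt 2) := ⟨r / 3, r / 2, by positivity, by linarith⟩
  have hη : closedBall (0 : Pt 2) η.rOut ⊆ Ω :=
    (closedBall_subset_ball (half_lt_self hr)).trans hball
  exact ⟨pointStrain η hη N, pointStrain_symm η hη N, suppIn_pointStrain η hη hsupp,
    curlCurlEq_pointStrain η hη hsupp hlow⟩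

/-- A point-supported incompatibility field `N ∈ E(Ω)` of finite
degree of divergence whose coefficients `N^α` vanish for `|α| < 2` (equivalently,
`N(w^α) = 0` for all test functions `w^α` matching the monomials of order `< 2` near
the origin) is the incompatibility `Curl Curl E` of a point-supported symmetric strain
field `E ∈ E(Ω,Sym)`. -/
theorem statement_16 (Ω : Set (Pt 2)) (hopen : IsOpen Ω) (hbdd : Bornology.IsBounded Ω)
    (hconn : IsConnected Ω) (h0 : (0 : Pt 2) ∈ Ω)
    (N : Dist 2 Ω) (hsupp : SuppIn N {0}) (hfin : EReal.IsFinite (degDiv N))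
    (hlow : ∀ a b : ℕ, a + b < 2 →
      ∀ w : TestFun 2 Ω, (w : Pt 2 → ℝ) =ᶠ[𝓝 (0 : Pt 2)] polyA a b → N.toLin w = 0) :
    ∃ E : Fin 2 → Fin 2 → Dist 2 Ω,
      (∀ i j, E i j = E j i) ∧ (∀ i j, SuppIn (E i j) {0}) ∧ CurlCurlEq E N :=
  statement_16_general Ω hopen h0 N hsupp hlow

end Paper
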